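/- Let N be a semifinite von Neumann algebra with faithful normal semifinite trace τ. If g ∈ N is invertible and g − 1 ∈ L¹_τ(N), then |g| = (g*g)^{1/2} is invertible and |g| − 1 ∈ L¹_τ(N). -/

import Mathlib

set_option synthInstance.maxHeartbeats 1000000
set_option maxHeartbeats 1000000

open scoped ENNReal NNReal

variable {H : Type} [NormedAddCommGroup H] [InnerProductSpace ℂ H] [CompleteSpace H]

/-- The absolute value `|x| = (x*x)^{1/2}` of a bounded operator, via the
continuous functional calculus. -/
noncomputable def absOp (x : H →L[ℂ] H) : H →L[ℂ] H := CFC.sqrt (star x * x)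

/-- `τ : N₊ → [0,∞]` is a faithful normal semifinite trace on the von Neumann algebra `N`.
The function `τ` is defined on all operators but its properties only concern positive
elements of `N`. -/
structure IsFNSTrace (N : VonNeumannAlgebra H) (τ : (H →L[ℂ] H) → ℝ≥0∞) : Prop where
  map_zero : τ 0 = 0
  additive : ∀ x y : H →L[ℂ] H, x ∈ N → y ∈ N → 0 ≤ x → 0 ≤ y → τ (x + y) = τ x + τ y
  homogeneous : ∀ (c : ℝ≥0) (x : H →L[ℂ] H), x ∈ N → 0 ≤ x → τ (c • x) = c * τ x
  tracial : ∀ x : H →L[ℂ] H, x ∈ N → τ (star x * x) = τ (x * star x)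
  faithful : ∀ x : H →L[ℂ] H, x ∈ N → 0 ≤ x → τ x = 0 → x = 0
  monotone : ∀ x y : H →L[ℂ] H, x ∈ N → y ∈ N → 0 ≤ x → x ≤ y → τ x ≤ τ y
  normal : ∀ (ι : Type) (_ : Preorder ι) (f : ι → (H →L[ℂ] H)) (x : H →L[ℂ] H),
      (∀ i, f i ∈ N) → (∀ i, 0 ≤ f i) → Monotone f → IsLUB (Set.range f) x →
      τ x = ⨆ i, τ (f i)
  semifinite : ∀ x : H →L[ℂ] H, x ∈ N → 0 ≤ x → x ≠ 0 →
      ∃ y : H →L[ℂ] H, y ∈ N ∧ 0 ≤ y ∧ y ≤ x ∧ y ≠ 0 ∧ τ y < ∞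

/-- Membership in the trace ideal `L¹_τ(N) = {x ∈ N : τ(|x|) < ∞}`. -/
def MemL1 (N : VonNeumannAlgebra H) (τ : (H →L[ℂ] H) → ℝ≥0∞) (x : H →L[ℂ] H) : Prop :=
  x ∈ N ∧ τ (absOp x) < ∞

/-- The norm `‖x‖_{1,∞} = ‖x‖ + τ(|x|)` on the trace ideal. -/
noncomputable def normL1 (τ : (H →L[ℂ] H) → ℝ≥0∞) (x : H →L[ℂ] H) : ℝ :=
  ‖x‖ + (τ (absOp x)).toReal

/-!
Put `a = g - 1`, so that `g*g - 1 = a + a* + a*a` and `τ(a*a) ≤ ‖a‖ τ(|a|) < ∞`. It suffices to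
bound `τ(X₊)` whenever `X ≤ a + a* + a*a` (applied to `X = ±(g*g - 1)`, with `a` resp. `-a`).
By normality, `τ(X₊) = supₘ τ(P X P)` with `P = ramp m X`, since these `P X P` increase to `X₊`;
and `ramp m` vanishes below `1/m`, so that `P X P ≥ m⁻¹ P²`. Completing a square gives
`a + a* ≤ s² + a s⁻² a*` with `s² = |a| + ε`; for `ε = 1/(2m)` the term `ε P²` is absorbed by
half of `P X P`, while conjugation by the contraction `P` does not increase the trace. Hence
`τ(P X P) ≤ 2 (2 τ|a| + τ(a*a))`. Finally `|√t - 1| ≤ |t - 1|` gives `||g| - 1| ≤ |g*g - 1|`.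
-/

noncomputable def ramp (m x : ℝ) : ℝ := max 0 (min 1 (m * x - 1))

@[fun_prop]
theorem continuous_ramp (m : ℝ) : Continuous (ramp m) := by
  unfold ramp; fun_prop

theorem ramp_nonneg (m x : ℝ) : 0 ≤ ramp m x := le_max_left _ _

theorem ramp_le_one (m x : ℝ) : ramp m x ≤ 1 := max_le zero_le_one (min_le_left _ _)

theorem ramp_eq_zero {m x : ℝ} (h : m * x ≤ 1) : ramp m x = 0 :=
  max_eq_left (min_le_of_right_le (by linarith))

theorem ramp_eq_one {m x : ℝ} (h : 2 ≤ m * x) : ramp m x = 1 := by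
  rw [ramp, min_eq_left (by linarith), max_eq_right zero_le_one]

theorem ramp_mono {m m' x : ℝ} (hx : 0 ≤ x) (hm : m ≤ m') : ramp m x ≤ ramp m' x := by
  unfold ramp; gcongr

theorem inv_mul_ramp_sq_le {m : ℝ} (hm : 0 < m) (x : ℝ) :
    m⁻¹ * ramp m x ^ 2 ≤ ramp m x ^ 2 * x := by
  rcases le_or_gt (m * x) 1 with h | h
  · simp [ramp_eq_zero h]
  · have : m⁻¹ < x := by rw [inv_lt_iff_one_lt_mul₀' hm]; exact h
    nlinarith [sq_nonneg (ramp m x)]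

theorem ramp_sq_mul_nonneg {m : ℝ} (hm : 0 < m) (x : ℝ) : 0 ≤ ramp m x ^ 2 * x :=
  (mul_nonneg (inv_nonneg.2 hm.le) (sq_nonneg _)).trans (inv_mul_ramp_sq_le hm x)

theorem ramp_sq_mul_le_posPart {m : ℝ} (hm : 0 ≤ m) (x : ℝ) : ramp m x ^ 2 * x ≤ x⁺ := by
  rcases le_or_gt x 0 with h | h
  · simp [ramp_eq_zero (show m * x ≤ 1 by nlinarith)]
  · rw [posPart_eq_self.mpr h.le]
    have : ramp m x ^ 2 ≤ 1 := pow_le_one₀ (ramp_nonneg m x) (ramp_le_one m x)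
    nlinarith

theorem posPart_sub_ramp_sq_mul_le {m : ℝ} (hm : 0 < m) (x : ℝ) :
    x⁺ - ramp m x ^ 2 * x ≤ 2 / m := by
  have h0 := ramp_sq_mul_nonneg hm x
  rcases le_or_gt 2 (m * x) with h | h
  · rw [ramp_eq_one h, posPart_eq_self.mpr (by nlinarith)]
    simp only [one_pow, one_mul, sub_self]; positivity
  · have : x⁺ ≤ 2 / m := by
      rw [le_div_iff₀ hm]; rcases le_total x 0 with hx | hx
      · rw [posPart_eq_zero.mpr hx]; linarith
      · rw [posPart_eq_self.mpr hx]; linarith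
    linarith

theorem ramp_sq_mul_mono {m m' : ℝ} (hm : 0 ≤ m) (hmm' : m ≤ m') (x : ℝ) :
    ramp m x ^ 2 * x ≤ ramp m' x ^ 2 * x := by
  rcases le_or_gt x 0 with h | h
  · simp [ramp_eq_zero (show m * x ≤ 1 by nlinarith),
      ramp_eq_zero (show m' * x ≤ 1 by nlinarith)]
  · gcongr
    · exact ramp_nonneg m x
    · exact ramp_mono h.le hmm'

theorem tendstoUniformly_ramp_sq_mul :
    TendstoUniformly (fun (n : ℕ) (x : ℝ) => ramp (n + 1) x ^ 2 * x) (fun x => x⁺)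
      Filter.atTop := by
  rw [Metric.tendstoUniformly_iff]
  intro ε hε
  obtain ⟨n₀, hn₀⟩ := exists_nat_gt (2 / ε)
  filter_upwards [Filter.eventually_ge_atTop n₀] with n hn x
  have hm : (0 : ℝ) < n + 1 := by positivity
  have hn' : (n₀ : ℝ) ≤ n := by exact_mod_cast hn
  rw [Real.dist_eq, abs_of_nonneg (by linarith [ramp_sq_mul_le_posPart hm.le x])]
  refine (posPart_sub_ramp_sq_mul_le hm x).trans_lt ?_
  rw [div_lt_iff₀ hm]
  rw [div_lt_iff₀ hε] at hn₀
  nlinarith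

theorem Real.abs_sqrt_sub_one_le {x : ℝ} (hx : 0 ≤ x) : |√x - 1| ≤ |x - 1| := by
  have h : x - 1 = (√x - 1) * (√x + 1) := by nlinarith [Real.mul_self_sqrt hx]
  rw [h, abs_mul, abs_of_nonneg (by positivity : 0 ≤ √x + 1)]
  exact le_mul_of_one_le_right (abs_nonneg _) (by linarith [Real.sqrt_nonneg x])

theorem add_star_le_mul_self_add {R : Type*} [Ring R] [PartialOrder R] [StarRing R]
    [StarOrderedRing R] {a s t : R} (hs : IsSelfAdjoint s) (ht : IsSelfAdjoint t)
    (hst : s * t = 1) : a + star a ≤ s * s + a * (t * t) * star a := by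
  have hts : t * s = 1 := by simpa [hs.star_eq, ht.star_eq] using congrArg star hst
  have h := star_mul_self_nonneg (s - t * star a)
  have e : star (s - t * star a) * (s - t * star a)
      = s * s + a * (t * t) * star a - (a + star a) := by
    simp only [star_sub, star_mul, star_star, hs.star_eq, ht.star_eq, sub_mul, mul_sub]
    simp only [← mul_assoc, hst, one_mul]
    simp only [mul_assoc a t s, hts, mul_one]
    noncomm_ring
  rwa [e, sub_nonneg] at h

section CStarAlgebra

variable {A : Type*} [CStarAlgebra A] [PartialOrder A] [StarOrderedRing A]

theorem CStarAlgebra.mul_self_le_norm_smul {b : A} (hb : 0 ≤ b) : b * b ≤ ‖b‖ • b := by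
  obtain ⟨r, hr, rfl⟩ : ∃ r : A, IsSelfAdjoint r ∧ r * r = b :=
    ⟨CFC.sqrt b, (CFC.sqrt_nonneg b).isSelfAdjoint, CFC.sqrt_mul_sqrt_self b⟩
  simpa only [hr.star_eq, mul_assoc] using
    CStarAlgebra.star_left_conjugate_le_norm_smul (a := r) (b := r * r)

theorem CFC.abs_sqrt_sub_one_le {G : A} (hG : 0 ≤ G) :
    CFC.abs (CFC.sqrt G - 1) ≤ CFC.abs (G - 1) := by
  have hG' : IsSelfAdjoint G := hG.isSelfAdjoint
  have h1 : CFC.sqrt G - 1 = cfc (fun x : ℝ => √x - 1) G := by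
    rw [cfc_sub _ _ G, cfc_const_one ℝ G, CFC.sqrt_eq_real_sqrt G, cfcₙ_eq_cfc]
  have h2 : G - 1 = cfc (fun x : ℝ => x - 1) G := by
    rw [cfc_sub _ _ G, cfc_const_one ℝ G, cfc_id' ℝ G]
  rw [h1, h2, CFC.abs_eq_cfc_norm _ (cfc_predicate _ _),
    CFC.abs_eq_cfc_norm _ (cfc_predicate _ _), ← cfc_comp' (fun x : ℝ => ‖x‖) _ G,
    ← cfc_comp' (fun x : ℝ => ‖x‖) _ G]
  exact cfc_mono fun x hx => Real.abs_sqrt_sub_one_le (spectrum_nonneg_of_nonneg hG hx)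

theorem monotone_cfc_ramp_sq_mul (X : A) :
    Monotone fun n : ℕ => cfc (fun x : ℝ => ramp (n + 1) x ^ 2 * x) X := by
  refine monotone_nat_of_le_succ fun n => cfc_mono fun x _ => ramp_sq_mul_mono ?_ ?_ x
  · positivity
  · push_cast; linarith

theorem isLUB_cfc_ramp_sq_mul (X : A) :
    IsLUB (Set.range fun n : ℕ => cfc (fun x : ℝ => ramp (n + 1) x ^ 2 * x) X)
      (cfc (fun x : ℝ => x⁺) X) :=
  isLUB_of_tendsto_atTop (monotone_cfc_ramp_sq_mul X) <|
    tendsto_cfc_fun tendstoUniformly_ramp_sq_mul.tendstoUniformlyOn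
      (Filter.Eventually.of_forall fun n => by fun_prop)

end CStarAlgebra

theorem absOp_eq_abs (x : H →L[ℂ] H) : absOp x = CFC.abs x := rfl

namespace VonNeumannAlgebra

variable (N : VonNeumannAlgebra H)

theorem isClosed : IsClosed (N : Set (H →L[ℂ] H)) := by
  rw [← N.centralizer_centralizer]
  exact Set.isClosed_centralizer _

theorem cfc_mem (f : ℝ → ℝ) {x : H →L[ℂ] H} (hx : x ∈ N) : cfc f x ∈ N :=
  have : IsClosed (N.toStarSubalgebra : Set (H →L[ℂ] H)) := N.isClosed
  _root_.cfc_mem (s := N.toStarSubalgebra) f hx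

theorem sqrt_mem {x : H →L[ℂ] H} (hx : x ∈ N) : CFC.sqrt x ∈ N := by
  by_cases hx0 : 0 ≤ x
  · rw [CFC.sqrt_eq_real_sqrt x, cfcₙ_eq_cfc]; exact N.cfc_mem _ hx
  · rw [CFC.sqrt_of_not_nonneg hx0]; exact zero_mem N

theorem absOp_mem {x : H →L[ℂ] H} (hx : x ∈ N) : absOp x ∈ N :=
  N.sqrt_mem (mul_mem (star_mem hx) hx)

theorem posPart_mem {x : H →L[ℂ] H} (hx : x ∈ N) : x⁺ ∈ N := by
  rw [CFC.posPart_def, cfcₙ_eq_cfc]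
  exact N.cfc_mem _ hx

theorem nnreal_smul_mem (c : ℝ≥0) {x : H →L[ℂ] H} (hx : x ∈ N) : c • x ∈ N := by
  rw [NNReal.smul_def, ← Complex.coe_smul]
  exact N.toStarSubalgebra.smul_mem hx _

theorem exists_mul_self_eq_add_smul_one {b : H →L[ℂ] H} (hb : b ∈ N) (hb0 : 0 ≤ b) {ε : ℝ}
    (hε : 0 < ε) : ∃ s t : H →L[ℂ] H, t ∈ N ∧ IsSelfAdjoint s ∧ IsSelfAdjoint t ∧
      s * t = 1 ∧ s * s = b + ε • 1 ∧ t * (b * b) * t ≤ b := by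
  -- `|x|` rather than `x` keeps `(√(|x| + ε))⁻¹` continuous on all of `ℝ`; the spectrum of `b`
  -- lies in `[0, ∞)`, where nothing changes
  have hpos : ∀ x : ℝ, 0 < √(|x| + ε) := fun x => Real.sqrt_pos.2 (by positivity)
  have hf : Continuous fun x : ℝ => √(|x| + ε) := by fun_prop
  have hg : Continuous fun x : ℝ => (√(|x| + ε))⁻¹ := hf.inv₀ fun x => (hpos x).ne'
  have hb' : IsSelfAdjoint b := hb0.isSelfAdjoint
  have hspec : ∀ x ∈ spectrum ℝ b, |x| = x := fun x hx =>
    abs_of_nonneg (spectrum_nonneg_of_nonneg hb0 hx)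
  refine ⟨cfc (fun x : ℝ => √(|x| + ε)) b, cfc (fun x : ℝ => (√(|x| + ε))⁻¹) b,
    N.cfc_mem _ hb, cfc_predicate _ _, cfc_predicate _ _, ?_, ?_, ?_⟩
  · rw [← cfc_mul _ _ b hf.continuousOn hg.continuousOn, ← cfc_const_one ℝ b hb']
    exact cfc_congr fun x _ => mul_inv_cancel₀ (hpos x).ne'
  · rw [← cfc_mul _ _ b hf.continuousOn hf.continuousOn, ← Algebra.algebraMap_eq_smul_one]
    conv_rhs =>
      rw [← cfc_id' ℝ b hb', ← cfc_add_const ε (fun x : ℝ => x) b continuousOn_id hb']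
    refine cfc_congr fun x hx => ?_
    rw [Real.mul_self_sqrt (by positivity), hspec x hx]
  · have hbb : b * b = cfc (fun x : ℝ => x * x) b := by
      rw [cfc_mul _ _ b, cfc_id' ℝ b hb']
    rw [hbb, ← cfc_mul _ _ b hg.continuousOn,
      ← cfc_mul (fun x : ℝ => (√(|x| + ε))⁻¹ * (x * x)) _ b (hg.mul (by fun_prop)).continuousOn
        hg.continuousOn]
    conv_rhs => rw [← cfc_id' ℝ b hb']
    refine cfc_mono (fun x hx => ?_) ((hg.mul (by fun_prop)).mul hg).continuousOn
      continuousOn_id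
    have hx0 : 0 ≤ x := spectrum_nonneg_of_nonneg hb0 hx
    rw [abs_of_nonneg hx0, mul_comm, ← mul_assoc, ← sq, inv_pow, Real.sq_sqrt (by positivity),
      inv_mul_le_iff₀ (by positivity)]
    nlinarith

end VonNeumannAlgebra

namespace IsFNSTrace

variable {N : VonNeumannAlgebra H} {τ : (H →L[ℂ] H) → ℝ≥0∞}

theorem map_conj_le (hτ : IsFNSTrace N τ) {y P : H →L[ℂ] H} (hy : y ∈ N) (hy0 : 0 ≤ y)
    (hP : P ∈ N) (hPsa : IsSelfAdjoint P) (hP1 : P * P ≤ 1) : τ (P * y * P) ≤ τ y := by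
  obtain ⟨r, hrN, hr, rfl⟩ : ∃ r ∈ N, IsSelfAdjoint r ∧ r * r = y :=
    ⟨CFC.sqrt y, N.sqrt_mem hy, (CFC.sqrt_nonneg y).isSelfAdjoint, CFC.sqrt_mul_sqrt_self y⟩
  have hrP : r * P ∈ N := mul_mem hrN hP
  have e₁ : P * (r * r) * P = star (r * P) * (r * P) := by
    rw [star_mul, hPsa.star_eq, hr.star_eq]; noncomm_ring
  have e₂ : r * P * star (r * P) = r * (P * P) * star r := by
    rw [star_mul, hPsa.star_eq]; noncomm_ring
  rw [e₁, hτ.tracial _ hrP, e₂]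
  calc τ (r * (P * P) * star r) ≤ τ (r * 1 * star r) :=
        hτ.monotone _ _ (e₂ ▸ mul_mem hrP (star_mem hrP))
          (by simpa using mul_mem hrN (star_mem hrN)) (e₂ ▸ mul_star_self_nonneg _)
          (star_right_conjugate_le_conjugate hP1 r)
    _ = τ (r * r) := by rw [mul_one, hr.star_eq]

theorem map_star_mul_self_le (hτ : IsFNSTrace N τ) {a : H →L[ℂ] H} (ha : a ∈ N) :
    τ (star a * a) ≤ ‖a‖₊ * τ (absOp a) := by
  have hb0 : 0 ≤ absOp a := CFC.abs_nonneg a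
  rw [← hτ.homogeneous _ _ (N.absOp_mem ha) hb0]
  refine hτ.monotone _ _ (mul_mem (star_mem ha) ha) (N.nnreal_smul_mem _ (N.absOp_mem ha))
    (star_mul_self_nonneg a) ?_
  calc star a * a = absOp a * absOp a := (CFC.abs_mul_abs a).symm
    _ ≤ ‖absOp a‖ • absOp a := CStarAlgebra.mul_self_le_norm_smul hb0
    _ = ‖a‖₊ • absOp a := by rw [NNReal.smul_def, coe_nnnorm, absOp_eq_abs, CFC.norm_abs]

theorem map_le_of_le_conj (hτ : IsFNSTrace N τ) {a P h : H →L[ℂ] H} {δ : ℝ} (ha : a ∈ N)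
    (hP : P ∈ N) (hPsa : IsSelfAdjoint P) (hP1 : P * P ≤ 1) (hh : h ∈ N) (hh0 : 0 ≤ h)
    (hδ : 0 < δ) (hδh : δ • (P * P) ≤ h) (hhP : h ≤ P * (a + star a + star a * a) * P) :
    τ h ≤ 2 * (2 * τ (absOp a) + τ (star a * a)) := by
  have hbN : absOp a ∈ N := N.absOp_mem ha
  have hb0 : 0 ≤ absOp a := CFC.abs_nonneg a
  have haaN : star a * a ∈ N := mul_mem (star_mem ha) ha
  obtain ⟨s, t, htN, hs, ht, hst, hss, htbt⟩ :=
    N.exists_mul_self_eq_add_smul_one hbN hb0 (half_pos hδ)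
  have hatN : a * t ∈ N := mul_mem ha htN
  have hat : a * (t * t) * star a = a * t * star (a * t) := by
    rw [star_mul, ht.star_eq, mul_assoc, mul_assoc, mul_assoc]
  have hattN : a * (t * t) * star a ∈ N := hat ▸ mul_mem hatN (star_mem hatN)
  have hatt0 : 0 ≤ a * (t * t) * star a := hat ▸ mul_star_self_nonneg _
  set Y := absOp a + a * (t * t) * star a + star a * a with hY
  have hYN : Y ∈ N := add_mem (add_mem hbN hattN) haaN
  have hY0 : 0 ≤ Y := add_nonneg (add_nonneg hb0 hatt0) (star_mul_self_nonneg a)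
  have hPYP : P * Y * P ∈ N := mul_mem (mul_mem hP hYN) hP
  have hPYP0 : 0 ≤ P * Y * P := by
    simpa only [hPsa.star_eq] using star_left_conjugate_nonneg hY0 P
  have hhY : h ≤ P * Y * P + P * Y * P := by
    have hle : h ≤ (δ / 2) • (P * P) + P * Y * P := by
      calc h ≤ P * (a + star a + star a * a) * P := hhP
        _ ≤ P * (s * s + a * (t * t) * star a + star a * a) * P := by
          simpa only [hPsa.star_eq] using star_left_conjugate_le_conjugate
            (add_le_add_left (add_star_le_mul_self_add hs ht hst) (star a * a)) P
        _ = (δ / 2) • (P * P) + P * Y * P := by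
          rw [hss, hY]; simp only [mul_add, add_mul, mul_smul_comm, smul_mul_assoc, mul_one]
          abel
    -- the slack `(δ / 2) • (P * P)` is absorbed by half of `h`
    have h2 : h + h ≤ h + (P * Y * P + P * Y * P) :=
      calc h + h ≤ ((δ / 2) • (P * P) + P * Y * P) + ((δ / 2) • (P * P) + P * Y * P) :=
            add_le_add hle hle
        _ = δ • (P * P) + (P * Y * P + P * Y * P) := by
          rw [add_add_add_comm, ← add_smul, add_halves]
        _ ≤ h + (P * Y * P + P * Y * P) := by gcongr
    exact le_of_add_le_add_left h2
  have hτY : τ Y ≤ 2 * τ (absOp a) + τ (star a * a) := by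
    have hbb : star (a * t) * (a * t) = t * (absOp a * absOp a) * t := by
      rw [absOp_eq_abs, CFC.abs_mul_abs, star_mul, ht.star_eq]; noncomm_ring
    have hτat : τ (a * (t * t) * star a) ≤ τ (absOp a) := by
      rw [hat, ← hτ.tracial _ hatN, hbb]
      exact hτ.monotone _ _ (hbb ▸ mul_mem (star_mem hatN) hatN) hbN
        (hbb ▸ star_mul_self_nonneg _) htbt
    rw [hY, hτ.additive _ _ (add_mem hbN hattN) haaN (add_nonneg hb0 hatt0)
        (star_mul_self_nonneg a), hτ.additive _ _ hbN hattN hb0 hatt0, two_mul]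
    gcongr
  calc τ h ≤ τ (P * Y * P + P * Y * P) := hτ.monotone _ _ hh (add_mem hPYP hPYP) hh0 hhY
    _ = τ (P * Y * P) + τ (P * Y * P) := hτ.additive _ _ hPYP hPYP hPYP0 hPYP0
    _ ≤ τ Y + τ Y := by gcongr <;> exact hτ.map_conj_le hYN hY0 hP hPsa hP1
    _ ≤ _ := by rw [← two_mul]; gcongr

theorem map_posPart_le (hτ : IsFNSTrace N τ) {X a : H →L[ℂ] H} (hX : X ∈ N) (ha : a ∈ N)
    (hXa : X ≤ a + star a + star a * a) :
    τ X⁺ ≤ 2 * (2 * τ (absOp a) + τ (star a * a)) := by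
  by_cases hXsa : IsSelfAdjoint X
  swap
  · simp [CFC.posPart_eq_zero_of_not_isSelfAdjoint hXsa, hτ.map_zero]
  rw [CFC.posPart_def, cfcₙ_eq_cfc, hτ.normal ℕ inferInstance _ _ (fun n => N.cfc_mem _ hX)
    (fun n => cfc_nonneg fun x _ => ramp_sq_mul_nonneg (by positivity) x)
    (monotone_cfc_ramp_sq_mul X) (isLUB_cfc_ramp_sq_mul X)]
  refine iSup_le fun n => ?_
  have hm : (0 : ℝ) < n + 1 := by positivity
  set P := cfc (ramp (n + 1)) X
  have hPsa : IsSelfAdjoint P := cfc_predicate _ _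
  have hPP : P * P = cfc (fun x => ramp (n + 1) x ^ 2) X := by
    rw [← cfc_mul _ _ X]; simp only [sq]
  have hP1 : P * P ≤ 1 := by
    rw [hPP]
    exact cfc_le_one _ _ fun x _ => pow_le_one₀ (ramp_nonneg _ _) (ramp_le_one _ _)
  have hconj : cfc (fun x : ℝ => ramp (n + 1) x ^ 2 * x) X = P * X * P := by
    conv_rhs => rw [← cfc_id' ℝ X]
    rw [← cfc_mul _ _ X, ← cfc_mul _ _ X]
    exact cfc_congr fun x _ => by ring
  refine hτ.map_le_of_le_conj ha (N.cfc_mem _ hX) hPsa hP1 (N.cfc_mem _ hX)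
    (cfc_nonneg fun x _ => ramp_sq_mul_nonneg hm x) (inv_pos.2 hm) ?_ ?_
  · rw [hPP, ← cfc_const_mul _ (fun x => ramp (n + 1) x ^ 2) X]
    exact cfc_mono fun x _ => inv_mul_ramp_sq_le hm x
  · rw [hconj]
    simpa only [hPsa.star_eq] using star_left_conjugate_le_conjugate hXa P

theorem memL1_star_mul_self_sub_one (hτ : IsFNSTrace N τ) {g : H →L[ℂ] H} (hgN : g ∈ N)
    (hg1 : MemL1 N τ (g - 1)) : MemL1 N τ (star g * g - 1) := by
  obtain ⟨ha, hafin⟩ := hg1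
  set a := g - 1
  set X := star g * g - 1
  have hXN : X ∈ N := sub_mem (mul_mem (star_mem hgN) hgN) (one_mem N)
  have hXsa : IsSelfAdjoint X := by
    simp only [X, IsSelfAdjoint, star_sub, star_mul, star_star, star_one]
  have hXa : X = a + star a + star a * a := by
    simp only [X, a, star_sub, star_one]; noncomm_ring
  have hK : 2 * (2 * τ (absOp a) + τ (star a * a)) < ∞ := by
    have := (hτ.map_star_mul_self_le ha).trans_lt (ENNReal.mul_lt_top ENNReal.coe_lt_top hafin)
    finiteness
  have hτX : τ X⁺ < ∞ := (hτ.map_posPart_le hXN ha hXa.le).trans_lt hK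
  have hτX' : τ (-X)⁺ < ∞ := by
    refine (hτ.map_posPart_le (neg_mem hXN) (neg_mem ha) ?_).trans_lt ?_
    · rw [hXa, star_neg, neg_mul_neg, neg_add, neg_add]
      exact add_le_add_right (neg_le_self (star_mul_self_nonneg a)) _
    · rwa [absOp_eq_abs, CFC.abs_neg, star_neg, neg_mul_neg]
  refine ⟨hXN, ?_⟩
  rw [absOp_eq_abs, ← CFC.posPart_add_negPart X, ← CFC.posPart_neg,
    hτ.additive _ _ (N.posPart_mem hXN) (N.posPart_mem (neg_mem hXN)) (CFC.posPart_nonneg _)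
      (CFC.posPart_nonneg _)]
  exact ENNReal.add_lt_top.2 ⟨hτX, hτX'⟩

theorem memL1_absOp_sub_one (hτ : IsFNSTrace N τ) {g : H →L[ℂ] H} (hgN : g ∈ N)
    (hg1 : MemL1 N τ (star g * g - 1)) : MemL1 N τ (absOp g - 1) := by
  have hN : absOp g - 1 ∈ N := sub_mem (N.absOp_mem hgN) (one_mem N)
  refine ⟨hN, lt_of_le_of_lt ?_ hg1.2⟩
  exact hτ.monotone _ _ (N.absOp_mem hN) (N.absOp_mem hg1.1) (CFC.abs_nonneg _)
    (CFC.abs_sqrt_sub_one_le (star_mul_self_nonneg g))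

end IsFNSTrace

/-- If `g ∈ N` is invertible with `g - 1 ∈ L¹_τ(N)`, then `|g| = (g*g)^{1/2}` is
invertible and `|g| - 1 ∈ L¹_τ(N)`. -/
theorem absOp_of_GL1_memL1 (N : VonNeumannAlgebra H)
    (τ : (H →L[ℂ] H) → ℝ≥0∞) (hτ : IsFNSTrace N τ)
    (g : H →L[ℂ] H) (hgN : g ∈ N) (hg : IsUnit g) (hg1 : MemL1 N τ (g - 1)) :
    IsUnit (absOp g) ∧ MemL1 N τ (absOp g - 1) :=
  ⟨(CFC.isUnit_sqrt_iff _).2 (hg.star.mul hg),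
    hτ.memL1_absOp_sub_one hgN (hτ.memL1_star_mul_self_sub_one hgN hg1)⟩
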